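/- (SOCP-inexactness forces zero dual multipliers: W̃ ⊆ W̃_d.) Let w ∈ ℝ^W. Assume fp'(w) = dp'(w) = 0, that FP'(w) attains its minimum, and that w is SOCP-inexact, i.e., every optimal FP'(w) solution (x, y, z_s, z_q) (one with objective value 0) satisfies ‖y_j‖₂ < ⟨c_q^j, x⟩ + γ_q^j + z_{q,j} for at least one index j. Then every optimal dual solution, i.e., every dual feasible (μ, λ) with D_w(μ, λ) = 0, satisfies λ_{q,j} = 0 for at least one index j. -/

import Mathlib

open Matrix

/-- Euclidean norm on `Fin k → ℝ`. -/
noncomputable def euclNorm {k : ℕ} (y : Fin k → ℝ) : ℝ := Real.sqrt (∑ i, (y i) ^ 2)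

/-- Euclidean inner product on `Fin k → ℝ`. -/
def dotp {k : ℕ} (a b : Fin k → ℝ) : ℝ := ∑ i, a i * b i

/-- The constant data of the SOCP `FP'(w)` (and of its dual `DP'(w)`). -/
structure SOCPData (n m s N W : ℕ) where
  Af : Matrix (Fin m) (Fin n) ℝ
  Bf : Matrix (Fin m) (Fin W) ℝ
  As : Matrix (Fin s) (Fin n) ℝ
  gf : Fin m → ℝ
  gs : Fin s → ℝ
  Ay : Fin N → Matrix (Fin 3) (Fin n) ℝ
  bY : Fin N → Fin 3 → ℝ
  cq : Fin N → Fin n → ℝ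
  gq : Fin N → ℝ

/-- Feasibility of `(x, y, z_s, z_q)` for the SOCP `FP'(w)`. -/
def FPfeas {n m s N W : ℕ} (d : SOCPData n m s N W) (w : Fin W → ℝ) (x : Fin n → ℝ)
    (y : Fin N → Fin 3 → ℝ) (zs : Fin s → ℝ) (zq : Fin N → ℝ) : Prop :=
  (∀ i, 0 ≤ zs i) ∧ (∀ j, 0 ≤ zq j) ∧
  d.Af.mulVec x + d.Bf.mulVec w + d.gf = 0 ∧
  (∀ i, d.As.mulVec x i + d.gs i ≤ zs i) ∧
  (∀ j, y j = (d.Ay j).mulVec x + d.bY j) ∧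
  (∀ j, euclNorm (y j) ≤ dotp (d.cq j) x + d.gq j + zq j)

/-- Dual feasibility of `(μ_f, μ_y, λ_s, λ_q)` for `DP'(w)`. -/
def DualFeas {n m s N W : ℕ} (d : SOCPData n m s N W) (muf : Fin m → ℝ)
    (muy : Fin N → Fin 3 → ℝ) (ls : Fin s → ℝ) (lq : Fin N → ℝ) : Prop :=
  (∀ i, 0 ≤ ls i ∧ ls i ≤ 1) ∧ (∀ j, 0 ≤ lq j ∧ lq j ≤ 1) ∧
  (d.Af.transpose.mulVec muf + d.As.transpose.mulVec ls
    = (∑ j, (d.Ay j).transpose.mulVec (muy j)) + ∑ j, lq j • d.cq j) ∧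
  (∀ j, euclNorm (muy j) ≤ lq j)

/-- The dual objective `D_w(μ, λ)`. -/
def Dobj {n m s N W : ℕ} (d : SOCPData n m s N W) (w : Fin W → ℝ) (muf : Fin m → ℝ)
    (muy : Fin N → Fin 3 → ℝ) (ls : Fin s → ℝ) (lq : Fin N → ℝ) : ℝ :=
  dotp muf (d.Bf.mulVec w + d.gf) + dotp ls d.gs
    - (∑ j, dotp (muy j) (d.bY j)) - ∑ j, lq j * d.gq j

/-- `fp'(w)`: the optimal (infimum) value of the primal SOCP `FP'(w)`, in `EReal`. -/
noncomputable def fpVal {n m s N W : ℕ} (d : SOCPData n m s N W) (w : Fin W → ℝ) : EReal :=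
  sInf {v : EReal | ∃ x y zs zq, FPfeas d w x y zs zq ∧
    v = (((∑ i, zs i) + ∑ j, zq j : ℝ) : EReal)}

/-- `dp'(w)`: the optimal (supremum) value of the dual SOCP `DP'(w)`, in `EReal`. -/
noncomputable def dpVal {n m s N W : ℕ} (d : SOCPData n m s N W) (w : Fin W → ℝ) : EReal :=
  sSup {v : EReal | ∃ muf muy ls lq, DualFeas d muf muy ls lq ∧
    v = ((Dobj d w muf muy ls lq : ℝ) : EReal)}

/-!
Weak duality with an explicit gap: for a primal and a dual feasible point, the primal objective
minus `D_w(μ, λ)` is a sum of nonnegative complementary-slackness terms, one per linear and one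
per conic constraint, and by Cauchy–Schwarz the conic term of line `j` is strictly positive as
soon as `λ_{q,j} > 0` and the cone inequality at `j` is strict. Both objectives being zero, some
`λ_{q,j}` must vanish at the line where an optimal primal solution is strict.
-/

lemma dotp_eq_dotProduct {k : ℕ} (a b : Fin k → ℝ) : dotp a b = a ⬝ᵥ b := rfl

lemma neg_dotp_le_euclNorm_mul {k : ℕ} (a b : Fin k → ℝ) :
    -dotp a b ≤ euclNorm a * euclNorm b := by
  have h := Real.sum_mul_le_sqrt_mul_sqrt Finset.univ (-a) b
  simpa [dotp, euclNorm, Finset.sum_neg_distrib] using h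

lemma euclNorm_nonneg {k : ℕ} (a : Fin k → ℝ) : 0 ≤ euclNorm a := Real.sqrt_nonneg _

lemma neg_dotp_sub_mul_le {k : ℕ} {μ y : Fin k → ℝ} {l t z : ℝ} (hμ : euclNorm μ ≤ l)
    (hl : l ≤ 1) (hz : 0 ≤ z) (hy : euclNorm y ≤ t + z) : -dotp μ y - l * t ≤ z := by
  have hl0 : 0 ≤ l := (euclNorm_nonneg μ).trans hμ
  calc -dotp μ y - l * t ≤ euclNorm μ * euclNorm y - l * t := by
        linarith [neg_dotp_le_euclNorm_mul μ y]
    _ ≤ l * (t + z) - l * t := by gcongr; exact euclNorm_nonneg y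
    _ = l * z := by ring
    _ ≤ z := mul_le_of_le_one_left hz hl

lemma neg_dotp_sub_mul_lt {k : ℕ} {μ y : Fin k → ℝ} {l t z : ℝ} (hμ : euclNorm μ ≤ l)
    (hl0 : 0 < l) (hl : l ≤ 1) (hz : 0 ≤ z) (hy : euclNorm y < t + z) :
    -dotp μ y - l * t < z := by
  calc -dotp μ y - l * t ≤ euclNorm μ * euclNorm y - l * t := by
        linarith [neg_dotp_le_euclNorm_mul μ y]
    _ ≤ l * euclNorm y - l * t := by gcongr; exact euclNorm_nonneg y
    _ < l * (t + z) - l * t := by gcongr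
    _ = l * z := by ring
    _ ≤ z := mul_le_of_le_one_left hz hl

section Duality

variable {n m s N W : ℕ} (d : SOCPData n m s N W) (w : Fin W → ℝ)

/-- Pairing the stationarity equation of the dual with `x` and using the primal equality
constraints eliminates `μ_f`, `B_f w + γ_f` and `b_y`. -/
lemma Dobj_eq_of_constraints {x : Fin n → ℝ} {y : Fin N → Fin 3 → ℝ} {muf : Fin m → ℝ}
    {muy : Fin N → Fin 3 → ℝ} {ls : Fin s → ℝ} {lq : Fin N → ℝ}
    (heq : d.Af *ᵥ x + d.Bf *ᵥ w + d.gf = 0) (hy : ∀ j, y j = d.Ay j *ᵥ x + d.bY j)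
    (hstat : d.Afᵀ *ᵥ muf + d.Asᵀ *ᵥ ls = (∑ j, (d.Ay j)ᵀ *ᵥ muy j) + ∑ j, lq j • d.cq j) :
    Dobj d w muf muy ls lq = ls ⬝ᵥ (d.As *ᵥ x + d.gs)
      - ∑ j, (dotp (muy j) (y j) + lq j * (dotp (d.cq j) x + d.gq j)) := by
  have hBf : d.Bf *ᵥ w + d.gf = -(d.Af *ᵥ x) := by
    rw [add_assoc] at heq
    exact eq_neg_of_add_eq_zero_right heq
  have hpair := congrArg (· ⬝ᵥ x) hstat
  simp only [add_dotProduct, sum_dotProduct, smul_dotProduct, smul_eq_mul, mulVec_transpose,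
    ← dotProduct_mulVec] at hpair
  simp only [Dobj, dotp_eq_dotProduct, hBf, hy, dotProduct_neg, dotProduct_add, mul_add,
    Finset.sum_add_distrib]
  linarith

lemma Dobj_lt_of_FPfeas_of_lt {x : Fin n → ℝ} {y : Fin N → Fin 3 → ℝ} {zs : Fin s → ℝ}
    {zq : Fin N → ℝ} {muf : Fin m → ℝ} {muy : Fin N → Fin 3 → ℝ} {ls : Fin s → ℝ}
    {lq : Fin N → ℝ} (hprimal : FPfeas d w x y zs zq) (hdual : DualFeas d muf muy ls lq)
    {j₀ : Fin N} (hlq : 0 < lq j₀)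
    (hstrict : euclNorm (y j₀) < dotp (d.cq j₀) x + d.gq j₀ + zq j₀) :
    Dobj d w muf muy ls lq < (∑ i, zs i) + ∑ j, zq j := by
  obtain ⟨hzs, hzq, heq, hineq, hy, hcone⟩ := hprimal
  obtain ⟨hls, hlq01, hstat, hmuy⟩ := hdual
  have hlinear : ls ⬝ᵥ (d.As *ᵥ x + d.gs) ≤ ∑ i, zs i := by
    refine Finset.sum_le_sum fun i _ => ?_
    have := mul_le_mul_of_nonneg_left (hineq i) (hls i).1
    simp only [Pi.add_apply]
    nlinarith [(hls i).2, hzs i]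
  have hconic : ∑ j, -(dotp (muy j) (y j) + lq j * (dotp (d.cq j) x + d.gq j)) < ∑ j, zq j := by
    refine Finset.sum_lt_sum (fun j _ => ?_) ⟨j₀, Finset.mem_univ _, ?_⟩
    · linarith [neg_dotp_sub_mul_le (hmuy j) (hlq01 j).2 (hzq j) (hcone j)]
    · linarith [neg_dotp_sub_mul_lt (hmuy j₀) hlq (hlq01 j₀).2 (hzq j₀) hstrict]
  rw [Dobj_eq_of_constraints d w heq hy hstat]
  rw [Finset.sum_neg_distrib] at hconic
  linarith

end Duality

theorem stmt_14_general {n m s N W : ℕ} (d : SOCPData n m s N W) (w : Fin W → ℝ)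
    (hattain : ∃ x y zs zq, FPfeas d w x y zs zq ∧ (∑ i, zs i) + ∑ j, zq j = (0 : ℝ))
    (hinexact : ∀ x y zs zq, FPfeas d w x y zs zq →
      (∑ i, zs i) + ∑ j, zq j = (0 : ℝ) →
      ∃ j, euclNorm (y j) < dotp (d.cq j) x + d.gq j + zq j) :
    ∀ muf muy ls lq, DualFeas d muf muy ls lq → Dobj d w muf muy ls lq = 0 →
      ∃ j, lq j = 0 := by
  intro muf muy ls lq hdual hobj
  obtain ⟨x, y, zs, zq, hprimal, hzero⟩ := hattain
  obtain ⟨j, hstrict⟩ := hinexact x y zs zq hprimal hzero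
  by_contra! hlq
  have hpos : 0 < lq j := lt_of_le_of_ne (hdual.2.1 j).1 (hlq j).symm
  have := Dobj_lt_of_FPfeas_of_lt d w hprimal hdual hpos hstrict
  linarith

/-- SOCP-inexactness forces zero dual multipliers (`W̃ ⊆ W̃_d`): if
`fp'(w) = dp'(w) = 0`, the minimum of `FP'(w)` is attained, and every optimal
primal solution has a strict second-order cone inequality at some line `j`, then
every optimal dual solution has `λ_{q,j} = 0` for some `j`. -/
theorem stmt_14 {n m s N W : ℕ} (hn : 0 < n) (hm : 0 < m) (hs : 0 < s) (hN : 0 < N)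
    (hW : 0 < W) (d : SOCPData n m s N W) (w : Fin W → ℝ)
    (hfp : fpVal d w = 0) (hdp : dpVal d w = 0)
    (hattain : ∃ x y zs zq, FPfeas d w x y zs zq ∧ (∑ i, zs i) + ∑ j, zq j = (0 : ℝ))
    (hinexact : ∀ x y zs zq, FPfeas d w x y zs zq →
      (∑ i, zs i) + ∑ j, zq j = (0 : ℝ) →
      ∃ j, euclNorm (y j) < dotp (d.cq j) x + d.gq j + zq j) :
    ∀ muf muy ls lq, DualFeas d muf muy ls lq → Dobj d w muf muy ls lq = 0 →
      ∃ j, lq j = 0 :=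
  stmt_14_general d w hattain hinexact
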